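/- arXiv:1910.11041 — 6 statements merged into one kernel-verified Lean document; each statement's English description precedes it below -/
import Mathlib

section
/- With the dynamic program of the previous statement, min over b' ≤ b and i ≤ m of h_part(i,m,b') equals the minimum over all partitions of {1,...,m} into at most b consecutive intervals of the sum of φ over the intervals. -/
open scoped ENNReal

/-- `blocksFrom s l j` : `l` is a list of consecutive nonempty intervals
`[(i₁,j₁),...,(i_b,j_b)]` with `i₁ = s`, `i_{k+1} = j_k + 1` and `j_b = j`,
i.e. a block partition of the columns `{s,...,j}`. -/
def blocksFrom : ℕ → List (ℕ × ℕ) → ℕ → Prop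
  | _, [], _ => False
  | s, [(i, e)], j => i = s ∧ s ≤ e ∧ e = j
  | s, (i, e) :: q :: rest, j => i = s ∧ s ≤ e ∧ blocksFrom (e + 1) (q :: rest) j

/-- The dynamic program `h_part` for minimizing the total `φ`-value of a block
partition: `hpart φ i j b'` is intended to be the best total value of a partition
of `[1,j]` into `b'` blocks whose last block is `[i,j]`. -/
noncomputable def hpart (φ : ℕ → ℕ → ℝ≥0∞) : ℕ → ℕ → ℕ → ℝ≥0∞
  | _, _, 0 => ⊤
  | i, j, 1 => if i = 1 then φ 1 j else ⊤
  | i, j, b + 2 => if i = 1 then ⊤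
      else ((Finset.Icc 1 (i - 1)).inf fun i' => hpart φ i' (i - 1) (b + 1)) + φ i j

/-
The dynamic program is exact for every fixed last block: `hpart φ i j (n + 1)` is the least
cost of a partition of `{1,...,j}` into `n + 1` blocks whose last block is `[i, j]`. Deleting
the last block of such a partition leaves a partition of `{1,...,i-1}` into `n` blocks ending
in some `[i', i-1]`, which is exactly the minimization in the recursion; conversely a minimizing
`i'` extends a partition attaining `hpart φ i' (i-1) n` by the block `[i, j]`. Minimizing over
the number of blocks and the start of the last block then gives the theorem.
-/

def blockCost (φ : ℕ → ℕ → ℝ≥0∞) (l : List (ℕ × ℕ)) : ℝ≥0∞ :=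
  (l.map fun p => φ p.1 p.2).sum

section

variable {φ : ℕ → ℕ → ℝ≥0∞}

lemma blockCost_append_singleton (l : List (ℕ × ℕ)) (i j : ℕ) :
    blockCost φ (l ++ [(i, j)]) = blockCost φ l + φ i j := by
  simp [blockCost]

lemma le_of_blocksFrom : ∀ {l : List (ℕ × ℕ)} {s j : ℕ}, blocksFrom s l j → s ≤ j
  | [], _, _, h => h.elim
  | [_], _, _, ⟨_, hse, hej⟩ => hse.trans_eq hej
  | (_, _) :: _ :: _, _, _, ⟨_, hse, h⟩ => by have := le_of_blocksFrom h; omega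

lemma blocksFrom_append_singleton_iff :
    ∀ {l : List (ℕ × ℕ)}, l ≠ [] → ∀ {s i e j : ℕ},
      blocksFrom s (l ++ [(i, e)]) j ↔ blocksFrom s l (i - 1) ∧ 1 ≤ i ∧ i ≤ e ∧ e = j
  | [], hl, _, _, _, _ => (hl rfl).elim
  | [(a, b)], _, s, i, e, j => by
    change (a = s ∧ s ≤ b ∧ i = b + 1 ∧ b + 1 ≤ e ∧ e = j) ↔
      ((a = s ∧ s ≤ b ∧ b = i - 1) ∧ 1 ≤ i ∧ i ≤ e ∧ e = j)
    omega
  | (a, b) :: q :: rest, _, s, i, e, j => by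
    change (a = s ∧ s ≤ b ∧ blocksFrom (b + 1) ((q :: rest) ++ [(i, e)]) j) ↔
      ((a = s ∧ s ≤ b ∧ blocksFrom (b + 1) (q :: rest) (i - 1)) ∧ 1 ≤ i ∧ i ≤ e ∧ e = j)
    rw [blocksFrom_append_singleton_iff (List.cons_ne_nil q rest)]
    tauto

lemma blocksFrom_append_singleton {l : List (ℕ × ℕ)} {s i e j : ℕ}
    (h : blocksFrom s (l ++ [(i, e)]) j) : s ≤ i ∧ i ≤ e ∧ e = j := by
  rcases l.eq_nil_or_concat' with rfl | ⟨l', p, rfl⟩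
  · obtain ⟨rfl, hse, hej⟩ := h
    exact ⟨le_rfl, hse, hej⟩
  · obtain ⟨hl, hi, hie, hej⟩ := (blocksFrom_append_singleton_iff (by simp)).mp h
    have := le_of_blocksFrom hl
    exact ⟨by omega, hie, hej⟩

lemma hpart_one_one (j : ℕ) : hpart φ 1 j 1 = φ 1 j := by
  simp [hpart]

lemma hpart_add_two {i : ℕ} (hi : i ≠ 1) (j n : ℕ) :
    hpart φ i j (n + 2) =
      (Finset.Icc 1 (i - 1)).inf (fun i' => hpart φ i' (i - 1) (n + 1)) + φ i j := by
  simp [hpart, hi]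

theorem hpart_le_blockCost (l : List (ℕ × ℕ)) {i j : ℕ} (h : blocksFrom 1 (l ++ [(i, j)]) j) :
    hpart φ i j (l.length + 1) ≤ blockCost φ (l ++ [(i, j)]) := by
  induction l using List.reverseRecOn generalizing i j with
  | nil =>
    obtain ⟨rfl, -⟩ := h
    simp [hpart_one_one, blockCost]
  | append_singleton l' p ih =>
    obtain ⟨i', e'⟩ := p
    obtain ⟨hl, -⟩ := (blocksFrom_append_singleton_iff (by simp)).mp h
    obtain ⟨hi', hi'e', rfl⟩ := blocksFrom_append_singleton hl
    have hi' : i' ∈ Finset.Icc 1 (i - 1) := Finset.mem_Icc.mpr ⟨hi', hi'e'⟩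
    calc hpart φ i j ((l' ++ [(i', i - 1)]).length + 1)
        = (Finset.Icc 1 (i - 1)).inf (fun i'' => hpart φ i'' (i - 1) (l'.length + 1)) + φ i j := by
          rw [List.length_append, List.length_singleton, hpart_add_two (by omega)]
      _ ≤ hpart φ i' (i - 1) (l'.length + 1) + φ i j := by gcongr; exact Finset.inf_le hi'
      _ ≤ blockCost φ (l' ++ [(i', i - 1)]) + φ i j := by gcongr; exact ih hl
      _ = blockCost φ (l' ++ [(i', i - 1)] ++ [(i, j)]) := (blockCost_append_singleton _ _ _).symm

theorem exists_blocksFrom_blockCost_le_hpart (n : ℕ) {i j : ℕ} (hij : i ≤ j)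
    (h : hpart φ i j (n + 1) ≠ ⊤) :
    ∃ l : List (ℕ × ℕ), l.length = n ∧ blocksFrom 1 (l ++ [(i, j)]) j ∧
      blockCost φ (l ++ [(i, j)]) ≤ hpart φ i j (n + 1) := by
  induction n generalizing i j with
  | zero =>
    obtain rfl : i = 1 := by
      by_contra hi
      exact h (by simp [hpart, hi])
    exact ⟨[], rfl, ⟨rfl, hij, rfl⟩, by simp [hpart_one_one, blockCost]⟩
  | succ n ih =>
    have hi : i ≠ 1 := by
      rintro rfl
      exact h (by simp [hpart])
    rw [hpart_add_two hi] at h ⊢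
    have hinf : (Finset.Icc 1 (i - 1)).inf (fun i' => hpart φ i' (i - 1) (n + 1)) ≠ ⊤ :=
      fun htop => h (by rw [htop, top_add])
    have hne : (Finset.Icc 1 (i - 1)).Nonempty :=
      Finset.nonempty_iff_ne_empty.mpr fun hempty => hinf (by rw [hempty, Finset.inf_empty])
    obtain ⟨i', hi', hmin⟩ := Finset.exists_mem_eq_inf _ hne fun i' => hpart φ i' (i - 1) (n + 1)
    rw [Finset.mem_Icc] at hi'
    rw [hmin] at hinf ⊢
    obtain ⟨l, hlen, hl, hcost⟩ := ih hi'.2 hinf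
    refine ⟨l ++ [(i', i - 1)], by simp [hlen], ?_, ?_⟩
    · exact (blocksFrom_append_singleton_iff (by simp)).mpr ⟨hl, by omega, hij, rfl⟩
    · rw [blockCost_append_singleton]
      gcongr

end

theorem hpart_min_correct_general (φ : ℕ → ℕ → ℝ≥0∞) (m b : ℕ) :
    ((Finset.Icc 1 b).inf fun b' => (Finset.Icc 1 m).inf fun i => hpart φ i m b') =
      sInf {x : ℝ≥0∞ | ∃ l : List (ℕ × ℕ), blocksFrom 1 l m ∧ l.length ≤ b ∧
        x = (l.map fun p => φ p.1 p.2).sum} := by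
  apply le_antisymm
  · refine le_sInf ?_
    rintro _ ⟨l, hl, hlen, rfl⟩
    obtain rfl | ⟨l', ⟨i, e⟩, rfl⟩ := l.eq_nil_or_concat'
    · exact hl.elim
    obtain ⟨hi, hie, rfl⟩ := blocksFrom_append_singleton hl
    rw [List.length_append, List.length_singleton] at hlen
    have hb' : l'.length + 1 ∈ Finset.Icc 1 b := Finset.mem_Icc.mpr ⟨by omega, hlen⟩
    calc ((Finset.Icc 1 b).inf fun b' => (Finset.Icc 1 e).inf fun i => hpart φ i e b')
        ≤ (Finset.Icc 1 e).inf fun i => hpart φ i e (l'.length + 1) := Finset.inf_le hb'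
      _ ≤ hpart φ i e (l'.length + 1) := Finset.inf_le (Finset.mem_Icc.mpr ⟨hi, hie⟩)
      _ ≤ blockCost φ (l' ++ [(i, e)]) := hpart_le_blockCost l' hl
  · refine Finset.le_inf fun b' hb' => Finset.le_inf fun i hi => ?_
    rw [Finset.mem_Icc] at hb' hi
    obtain ⟨n, rfl⟩ : ∃ n, b' = n + 1 := ⟨b' - 1, by omega⟩
    by_cases htop : hpart φ i m (n + 1) = ⊤
    · exact htop ▸ le_top
    obtain ⟨l, hlen, hl, hcost⟩ := exists_blocksFrom_blockCost_le_hpart n hi.2 htop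
    refine (sInf_le ?_).trans hcost
    exact ⟨_, hl, by simp [hlen]; omega, rfl⟩

/-- Minimizing over the number of blocks `b' ≤ b` and the start `i ≤ m` of the last
block, the dynamic program computes the minimum total `φ`-value over all partitions
of `{1,...,m}` into at most `b` consecutive intervals. -/
theorem hpart_min_correct (φ : ℕ → ℕ → ℝ≥0∞) (m b : ℕ) (hm : 1 ≤ m) (hb : 1 ≤ b) :
    ((Finset.Icc 1 b).inf fun b' => (Finset.Icc 1 m).inf fun i => hpart φ i m b') =
      sInf {x : ℝ≥0∞ | ∃ l : List (ℕ × ℕ), blocksFrom 1 l m ∧ l.length ≤ b ∧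
        x = (l.map fun p => φ p.1 p.2).sum} :=
  hpart_min_correct_general φ m b
end

section
/- Let A be a binary matrix (alignment with states {0,1}). If A has a perfect phylogeny (homoplasy score 0), then no two columns j, k of A are incompatible, where columns j and k are incompatible if all four gamete patterns (1,1), (1,0), (0,1), (0,0) occur among the rows restricted to columns j and k. -/
open Finset

/-- Hamming distance between two sequences indexed by a finite set of columns. -/
def hamm {J S : Type*} [Fintype J] [DecidableEq S] (x y : J → S) : ℕ :=
  (Finset.univ.filter fun j => x j ≠ y j).card

theorem hamm_comm {J S : Type*} [Fintype J] [DecidableEq S] (x y : J → S) :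
    hamm x y = hamm y x := by
  unfold hamm
  congr 1
  exact Finset.filter_congr fun j _ => by rw [ne_comm]

/-- A phylogenetic tree on `n` taxa: an unrooted tree (connected acyclic graph)
with no degree-2 vertices, together with an injective assignment of the `n` taxa
to leaves-vertices. -/
structure PhyloTree (n : ℕ) where
  V : Type
  [fintV : Fintype V]
  [decV : DecidableEq V]
  G : SimpleGraph V
  [decAdj : DecidableRel G.Adj]
  connected : G.Connected
  acyclic : G.IsAcyclic
  leaf : Fin n → V
  leaf_inj : Function.Injective leaf
  no_deg2 : ∀ v : V, ¬ ∃ a b : V, a ≠ b ∧ G.Adj v a ∧ G.Adj v b ∧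
      ∀ c : V, G.Adj v c → c = a ∨ c = b

attribute [instance] PhyloTree.fintV PhyloTree.decV PhyloTree.decAdj

/-- Parsimony score of a labeled tree: the sum over all edges of the Hamming
distance between the labels of the endpoints. -/
def PS {n : ℕ} {J S : Type*} [Fintype J] [DecidableEq S]
    (T : PhyloTree n) (τ : T.V → J → S) : ℕ :=
  ∑ e ∈ T.G.edgeFinset,
    Sym2.lift ⟨fun u v => hamm (τ u) (τ v), fun u v => hamm_comm _ _⟩ e

/-- Null score of a single column: number of distinct states minus one. -/
def s0col {n : ℕ} {S : Type*} [DecidableEq S] (c : Fin n → S) : ℕ :=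
  (Finset.univ.image c).card - 1

/-- Null score of an alignment: the sum of the null scores of its columns. -/
def s0 {n : ℕ} {J S : Type*} [Fintype J] [DecidableEq S] (A : Fin n → J → S) : ℕ :=
  ∑ j : J, s0col fun i => A i j

/-- Minimum parsimony score of an alignment over all phylogenetic trees and all
labelings extending the rows. -/
noncomputable def minPS {n : ℕ} {J S : Type*} [Fintype J] [DecidableEq S] (A : Fin n → J → S) : ℕ :=
  sInf {p : ℕ | ∃ (T : PhyloTree n) (τ : T.V → J → S),
    (∀ i, τ (T.leaf i) = A i) ∧ PS T τ = p}

/-- Homoplasy score of an alignment: minimum parsimony score minus null score. -/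
noncomputable def homoplasy {n : ℕ} {J S : Type*} [Fintype J] [DecidableEq S]
    (A : Fin n → J → S) : ℕ :=
  minPS A - s0 A

section Aux
variable {V : Type*} {G : SimpleGraph V}

lemma const_of_reachable {S : Type*} {g : V → S}
    (hG : ∀ x y, G.Adj x y → g x = g y) {u v : V} (h : G.Reachable u v) : g u = g v := by
  obtain ⟨w⟩ := h
  induction w with
  | nil => rfl
  | cons h p ih => exact (hG _ _ h).trans ih

lemma covered_by_four (hconn : G.Connected) (a b c d : V) (v : V) :
    ∃ x, (x = a ∨ x = b ∨ x = c ∨ x = d) ∧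
      (G.deleteEdges {s(a,b), s(c,d)}).Reachable x v := by
  set P : V → Prop := fun y => ∃ x, (x = a ∨ x = b ∨ x = c ∨ x = d) ∧
      (G.deleteEdges {s(a,b), s(c,d)}).Reachable x y with hP
  show P v
  have key : ∀ {u w : V}, G.Walk u w → P u → P w := by
    intro u w hw
    induction hw with
    | nil => exact id
    | @cons u p q hadj w ih =>
        intro hu
        apply ih
        by_cases hmem : s(u, p) ∈ ({s(a,b), s(c,d)} : Set (Sym2 V))
        · rcases hmem with h | h
          · rcases Sym2.eq_iff.mp h with ⟨rfl, rfl⟩ | ⟨rfl, rfl⟩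
            · exact ⟨p, Or.inr (Or.inl rfl), SimpleGraph.Reachable.refl _⟩
            · exact ⟨p, Or.inl rfl, SimpleGraph.Reachable.refl _⟩
          · rcases Sym2.eq_iff.mp h with ⟨rfl, rfl⟩ | ⟨rfl, rfl⟩
            · exact ⟨p, Or.inr (Or.inr (Or.inr rfl)), SimpleGraph.Reachable.refl _⟩
            · exact ⟨p, Or.inr (Or.inr (Or.inl rfl)), SimpleGraph.Reachable.refl _⟩
        · obtain ⟨x, hx, hr⟩ := hu
          exact ⟨x, hx, hr.trans (SimpleGraph.Adj.reachable (SimpleGraph.deleteEdges_adj.mpr ⟨hadj, hmem⟩))⟩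
  exact key (hconn a v).some ⟨a, Or.inl rfl, SimpleGraph.Reachable.refl _⟩

end Aux

lemma bool_case_two : ∀ pa pb : Bool × Bool,
    ((true, true) = pa ∨ (true, true) = pb) →
    ((true, false) = pa ∨ (true, false) = pb) →
    ((false, true) = pa ∨ (false, true) = pb) → False := by decide

set_option synthInstance.maxSize 2000 in
lemma bool_case_four : ∀ pa pb pc pd : Bool × Bool,
    pa.1 ≠ pb.1 → pa.2 = pb.2 → pc.1 = pd.1 → pc.2 ≠ pd.2 →
    ((true, true) = pa ∨ (true, true) = pb ∨ (true, true) = pc ∨ (true, true) = pd) →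
    ((true, false) = pa ∨ (true, false) = pb ∨ (true, false) = pc ∨ (true, false) = pd) →
    ((false, true) = pa ∨ (false, true) = pb ∨ (false, true) = pc ∨ (false, true) = pd) →
    ((false, false) = pa ∨ (false, false) = pb ∨ (false, false) = pc ∨ (false, false) = pd) →
    False := by
  rintro ⟨x1,y1⟩ ⟨x2,y2⟩ ⟨x3,y3⟩ ⟨x4,y4⟩
  revert x1 y1 x2 y2 x3 y3 x4 y4
  decide

/-- Four-gamete necessity: if a binary alignment `A` has a perfect phylogeny
(a tree and labeling achieving parsimony score exactly `s0 A`, i.e. homoplasy 0),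
then no two columns of `A` are incompatible, where columns `j,k` are incompatible
when all four gamete patterns `(1,1), (1,0), (0,1), (0,0)` occur among the rows. -/
theorem perfect_phylogeny_compatible {n m : ℕ} (A : Fin n → Fin m → Bool)
    (hperf : ∃ (T : PhyloTree n) (τ : T.V → Fin m → Bool),
      (∀ i, τ (T.leaf i) = A i) ∧ PS T τ = s0 A) :
    ∀ j k : Fin m,
      ¬ ((∃ i, A i j = true ∧ A i k = true) ∧ (∃ i, A i j = true ∧ A i k = false) ∧
         (∃ i, A i j = false ∧ A i k = true) ∧ (∃ i, A i j = false ∧ A i k = false)) := by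
  rintro j k ⟨⟨i1, h1j, h1k⟩, ⟨i2, h2j, h2k⟩, ⟨i3, h3j, h3k⟩, ⟨i4, h4j, h4k⟩⟩
  obtain ⟨T, τ, hleaf, hps⟩ := hperf
  -- per-column indicator on edges
  set f : Fin m → Sym2 T.V → ℕ := fun jj => Sym2.lift
    ⟨fun u v => if τ u jj = τ v jj then 0 else 1, fun u v => if_congr eq_comm rfl rfl⟩ with hf
  set cnt : Fin m → ℕ := fun jj => ∑ e ∈ T.G.edgeFinset, f jj e with hcnt
  have hamm_sum : ∀ (x y : Fin m → Bool),
      hamm x y = ∑ jj : Fin m, if x jj = y jj then 0 else 1 := by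
    intro x y
    rw [hamm, Finset.card_filter]
    exact Finset.sum_congr rfl fun jj _ => by by_cases h : x jj = y jj <;> simp [h]
  -- PS decomposes over columns
  have hPS : PS T τ = ∑ jj : Fin m, cnt jj := by
    rw [PS]
    rw [show (∑ e ∈ T.G.edgeFinset,
        Sym2.lift ⟨fun u v => hamm (τ u) (τ v), fun u v => hamm_comm _ _⟩ e)
        = ∑ e ∈ T.G.edgeFinset, ∑ jj : Fin m, f jj e from
      Finset.sum_congr rfl fun e _ => by
        induction e using Sym2.ind with
        | _ u v => simp only [Sym2.lift_mk, hf]; exact hamm_sum (τ u) (τ v)]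
    exact Finset.sum_comm
  -- every column's change count is at least its null score
  have hge : ∀ jj : Fin m, s0col (fun i => A i jj) ≤ cnt jj := by
    intro jj
    by_cases h : ∃ x y, T.G.Adj x y ∧ τ x jj ≠ τ y jj
    · obtain ⟨x, y, hadj, hne⟩ := h
      have h1 : (1 : ℕ) ≤ cnt jj := by
        have hmem : s(x, y) ∈ T.G.edgeFinset := SimpleGraph.mem_edgeFinset.mpr hadj
        have := Finset.single_le_sum (f := f jj) (fun e _ => Nat.zero_le _) hmem
        rw [hcnt]
        refine le_trans ?_ this
        simp [hf, if_neg hne]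
      have h2 : s0col (fun i => A i jj) ≤ 1 := by
        rw [s0col]
        have : (Finset.univ.image fun i => A i jj).card ≤ 2 := by
          have := Finset.card_le_univ (Finset.univ.image fun i => A i jj)
          simpa using this
        omega
      omega
    · push_neg at h
      have hconst : ∀ i i' : Fin n, A i jj = A i' jj := by
        intro i i'
        have := const_of_reachable (g := fun v => τ v jj) h (T.connected (T.leaf i) (T.leaf i'))
        simpa [hleaf i, hleaf i'] using this
      have : s0col (fun i => A i jj) = 0 := by
        rw [s0col]
        have hle : (Finset.univ.image fun i => A i jj).card ≤ 1 := by
          apply Finset.card_le_one.mpr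
          intro a ha b hb
          obtain ⟨i, _, rfl⟩ := Finset.mem_image.mp ha
          obtain ⟨i', _, rfl⟩ := Finset.mem_image.mp hb
          exact hconst i i'
        omega
      omega
  -- equality per column
  have hsum : ∑ jj : Fin m, s0col (fun i => A i jj) = ∑ jj : Fin m, cnt jj := by
    rw [← hPS, hps, s0]
  have heq : ∀ jj : Fin m, s0col (fun i => A i jj) = cnt jj :=
    fun jj => (Finset.sum_eq_sum_iff_of_le (fun i _ => hge i)).mp hsum jj (Finset.mem_univ jj)
  -- columns j and k have exactly one changing edge
  have hcol1 : ∀ jj : Fin m, (∃ i, A i jj = true) → (∃ i', A i' jj = false) → cnt jj = 1 := by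
    rintro jj ⟨i, hi⟩ ⟨i', hi'⟩
    rw [← heq jj, s0col]
    have : (Finset.univ.image fun i => A i jj) = Finset.univ := by
      apply Finset.eq_univ_iff_forall.mpr
      intro b
      cases b
      · exact Finset.mem_image.mpr ⟨i', Finset.mem_univ _, hi'⟩
      · exact Finset.mem_image.mpr ⟨i, Finset.mem_univ _, hi⟩
    rw [this]
    simp
  have hcj : cnt j = 1 := hcol1 j ⟨i1, h1j⟩ ⟨i3, h3j⟩
  have hck : cnt k = 1 := hcol1 k ⟨i1, h1k⟩ ⟨i2, h2k⟩
  -- extract unique changing edges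
  have huniq : ∀ jj : Fin m, cnt jj = 1 → ∃ a b : T.V, T.G.Adj a b ∧ τ a jj ≠ τ b jj ∧
      ∀ u v : T.V, T.G.Adj u v → τ u jj ≠ τ v jj → s(u, v) = s(a, b) := by
    intro jj hc
    have hfilter : cnt jj = (T.G.edgeFinset.filter fun e => f jj e = 1).card := by
      rw [hcnt, Finset.card_filter]
      refine Finset.sum_congr rfl fun e _ => ?_
      induction e using Sym2.ind with
      | _ u v => by_cases h : τ u jj = τ v jj <;> simp [hf, h]
    rw [hfilter] at hc
    obtain ⟨E0, hE0⟩ := Finset.card_eq_one.mp hc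
    have hmemE0 : E0 ∈ T.G.edgeFinset ∧ f jj E0 = 1 := by
      have : E0 ∈ T.G.edgeFinset.filter fun e => f jj e = 1 := hE0 ▸ Finset.mem_singleton_self E0
      exact ⟨(Finset.mem_filter.mp this).1, (Finset.mem_filter.mp this).2⟩
    obtain ⟨a, b, rfl⟩ : ∃ a b, E0 = s(a, b) := by
      induction E0 using Sym2.ind with
      | _ x y => exact ⟨x, y, rfl⟩
    refine ⟨a, b, SimpleGraph.mem_edgeFinset.mp hmemE0.1, ?_, ?_⟩
    · intro h
      have := hmemE0.2
      simp [hf, h] at this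
    · intro u v hadj hne
      have : s(u, v) ∈ T.G.edgeFinset.filter fun e => f jj e = 1 :=
        Finset.mem_filter.mpr ⟨SimpleGraph.mem_edgeFinset.mpr hadj, by simp [hf, if_neg hne]⟩
      rw [hE0] at this
      exact Finset.mem_singleton.mp this
  obtain ⟨a, b, hab, habj, habU⟩ := huniq j hcj
  obtain ⟨c, d, hcd, hcdk, hcdU⟩ := huniq k hck
  -- pattern function
  set σ : T.V → Bool × Bool := fun v => (τ v j, τ v k) with hσ
  have hconstG' : ∀ x y : T.V, (T.G.deleteEdges {s(a,b), s(c,d)}).Adj x y → σ x = σ y := by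
    intro x y hxy
    obtain ⟨hadj, hnot⟩ := SimpleGraph.deleteEdges_adj.mp hxy
    by_contra hne
    have : τ x j ≠ τ y j ∨ τ x k ≠ τ y k := by
      by_contra h
      push_neg at h
      exact hne (Prod.ext h.1 h.2)
    rcases this with h | h
    · exact hnot (Or.inl (habU x y hadj h))
    · exact hnot (Or.inr (hcdU x y hadj h))
  have hcover : ∀ v : T.V, σ v = σ a ∨ σ v = σ b ∨ σ v = σ c ∨ σ v = σ d := by
    intro v
    obtain ⟨x, hx, hr⟩ := covered_by_four T.connected a b c d v
    have := const_of_reachable hconstG' hr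
    rcases hx with rfl | rfl | rfl | rfl
    · exact Or.inl this.symm
    · exact Or.inr (Or.inl this.symm)
    · exact Or.inr (Or.inr (Or.inl this.symm))
    · exact Or.inr (Or.inr (Or.inr this.symm))
  have hpat : ∀ i : Fin n, σ (T.leaf i) = (A i j, A i k) := by
    intro i; rw [hσ]; simp [hleaf i]
  have H1 : (true, true) = σ a ∨ (true, true) = σ b ∨ (true, true) = σ c ∨ (true, true) = σ d := by
    have := hcover (T.leaf i1); rw [hpat i1, h1j, h1k] at this
    rcases this with h|h|h|h
    exacts [Or.inl h, Or.inr (Or.inl h), Or.inr (Or.inr (Or.inl h)), Or.inr (Or.inr (Or.inr h))]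
  have H2 : (true, false) = σ a ∨ (true, false) = σ b ∨ (true, false) = σ c ∨ (true, false) = σ d := by
    have := hcover (T.leaf i2); rw [hpat i2, h2j, h2k] at this
    rcases this with h|h|h|h
    exacts [Or.inl h, Or.inr (Or.inl h), Or.inr (Or.inr (Or.inl h)), Or.inr (Or.inr (Or.inr h))]
  have H3 : (false, true) = σ a ∨ (false, true) = σ b ∨ (false, true) = σ c ∨ (false, true) = σ d := by
    have := hcover (T.leaf i3); rw [hpat i3, h3j, h3k] at this
    rcases this with h|h|h|h
    exacts [Or.inl h, Or.inr (Or.inl h), Or.inr (Or.inr (Or.inl h)), Or.inr (Or.inr (Or.inr h))]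
  have H4 : (false, false) = σ a ∨ (false, false) = σ b ∨ (false, false) = σ c ∨ (false, false) = σ d := by
    have := hcover (T.leaf i4); rw [hpat i4, h4j, h4k] at this
    rcases this with h|h|h|h
    exacts [Or.inl h, Or.inr (Or.inl h), Or.inr (Or.inr (Or.inl h)), Or.inr (Or.inr (Or.inr h))]
  by_cases hef : s(a, b) = s(c, d)
  · -- same edge: only two patterns available
    have hcd' : σ c = σ a ∨ σ c = σ b := by
      rcases Sym2.eq_iff.mp hef with ⟨rfl, rfl⟩ | ⟨rfl, rfl⟩
      · exact Or.inl rfl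
      · exact Or.inr rfl
    have hdd' : σ d = σ a ∨ σ d = σ b := by
      rcases Sym2.eq_iff.mp hef with ⟨rfl, rfl⟩ | ⟨rfl, rfl⟩
      · exact Or.inr rfl
      · exact Or.inl rfl
    have H1' : (true, true) = σ a ∨ (true, true) = σ b := by
      rcases H1 with h|h|h|h
      · exact Or.inl h
      · exact Or.inr h
      · rcases hcd' with h'|h' <;> [exact Or.inl (h.trans h'); exact Or.inr (h.trans h')]
      · rcases hdd' with h'|h' <;> [exact Or.inl (h.trans h'); exact Or.inr (h.trans h')]
    have H2' : (true, false) = σ a ∨ (true, false) = σ b := by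
      rcases H2 with h|h|h|h
      · exact Or.inl h
      · exact Or.inr h
      · rcases hcd' with h'|h' <;> [exact Or.inl (h.trans h'); exact Or.inr (h.trans h')]
      · rcases hdd' with h'|h' <;> [exact Or.inl (h.trans h'); exact Or.inr (h.trans h')]
    have H3' : (false, true) = σ a ∨ (false, true) = σ b := by
      rcases H3 with h|h|h|h
      · exact Or.inl h
      · exact Or.inr h
      · rcases hcd' with h'|h' <;> [exact Or.inl (h.trans h'); exact Or.inr (h.trans h')]
      · rcases hdd' with h'|h' <;> [exact Or.inl (h.trans h'); exact Or.inr (h.trans h')]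
    exact bool_case_two (σ a) (σ b) H1' H2' H3'
  · -- different edges
    have habk : τ a k = τ b k := by
      by_contra h
      exact hef (hcdU a b hab h)
    have hcdj : τ c j = τ d j := by
      by_contra h
      exact hef ((habU c d hcd h).symm)
    exact bool_case_four (σ a) (σ b) (σ c) (σ d) habj habk hcdj hcdk H1 H2 H3 H4
end

section
/- Let B be a finite set of n blocks and let G be the graph whose vertices are the mergeable subsets B' ⊆ B with |B'| ≤ p, each vertex weighted by |B'| − 1, with an edge between two vertices whose subsets intersect. Then independent sets I in G whose elements cover all of B correspond exactly to partitions of B into p-multiblocks each of which is mergeable, and such an independent set I of weight w yields a partition into exactly n − w multiblocks. Hence the minimum number of mergeable p-multiblocks in such a partition is n − (maximum weight of an independent set covering B), and a maximum-weight independent set can always be extended to one covering B without decreasing its weight (by adding singletons, which have weight 0). -/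
variable {β : Type*} [Fintype β] [DecidableEq β]

/-- An independent set in the graph whose vertices are the mergeable subsets of
size at most `p` (each nonempty), with edges between intersecting subsets:
a family of pairwise disjoint such subsets. -/
def GoodFam (mergeable : Finset β → Prop) (p : ℕ) (I : Finset (Finset β)) : Prop :=
  (∀ S ∈ I, mergeable S ∧ S.Nonempty ∧ S.card ≤ p) ∧
    (I : Set (Finset β)).Pairwise Disjoint

/-- The family `I` covers all the blocks. -/
def CoversAll (I : Finset (Finset β)) : Prop := ∀ b : β, ∃ S ∈ I, b ∈ S

/-- Weight of a family: each subset `S` weighs `|S| - 1`. -/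
def famWeight (I : Finset (Finset β)) : ℕ := ∑ S ∈ I, (S.card - 1)

/-- Correspondence between independent sets covering the block set `B` and
partitions of `B` into mergeable `p`-multiblocks: an independent set `I` of
weight `w` covering `B` is a partition into exactly `n - w` multiblocks; hence
the minimum number of mergeable `p`-multiblocks equals `n` minus the maximum
weight of an independent set covering `B`; moreover any independent set can be
extended (by adding weight-0 singletons) to one covering `B` without decreasing
its weight. -/
theorem independent_set_multiblock_correspondence
    (mergeable : Finset β → Prop) (hsing : ∀ b : β, mergeable {b})
    (p : ℕ) (hp : 1 ≤ p) :
    (∀ I : Finset (Finset β), GoodFam mergeable p I → CoversAll I →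
        I.card = Fintype.card β - famWeight I) ∧
    (sInf {c : ℕ | ∃ I : Finset (Finset β),
          GoodFam mergeable p I ∧ CoversAll I ∧ I.card = c} =
      Fintype.card β - sSup {w : ℕ | ∃ I : Finset (Finset β),
          GoodFam mergeable p I ∧ CoversAll I ∧ famWeight I = w}) ∧
    (∀ I : Finset (Finset β), GoodFam mergeable p I →
        ∃ I' : Finset (Finset β), I ⊆ I' ∧ GoodFam mergeable p I' ∧ CoversAll I' ∧
          famWeight I ≤ famWeight I') := by
  classical
  -- Key identity: for a good covering family, weight + size = n.
  have key : ∀ I : Finset (Finset β), GoodFam mergeable p I → CoversAll I →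
      famWeight I + I.card = Fintype.card β := by
    intro I hI hc
    have hdisj : ∀ x ∈ I, ∀ y ∈ I, x ≠ y → Disjoint (id x) (id y) := by
      intro x hx y hy hxy
      exact hI.2 hx hy hxy
    have huniv : I.biUnion id = Finset.univ := by
      ext b
      simp only [Finset.mem_biUnion, id_eq, Finset.mem_univ, iff_true]
      exact hc b
    have hsum : ∑ S ∈ I, S.card = Fintype.card β := by
      have h := Finset.card_biUnion hdisj
      rw [huniv, Finset.card_univ] at h
      simpa using h.symm
    calc famWeight I + I.card = ∑ S ∈ I, (S.card - 1) + ∑ _S ∈ I, 1 := by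
          simp [famWeight]
      _ = ∑ S ∈ I, ((S.card - 1) + 1) := (Finset.sum_add_distrib).symm
      _ = ∑ S ∈ I, S.card := by
          refine Finset.sum_congr rfl fun S hS => ?_
          exact Nat.sub_add_cancel (Finset.card_pos.mpr (hI.1 S hS).2.1)
      _ = Fintype.card β := hsum
  -- Part 1
  have part1 : ∀ I : Finset (Finset β), GoodFam mergeable p I → CoversAll I →
      I.card = Fintype.card β - famWeight I := by
    intro I hI hc
    have := key I hI hc
    omega
  -- Part 3 (extension)
  have part3 : ∀ I : Finset (Finset β), GoodFam mergeable p I →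
      ∃ I' : Finset (Finset β), I ⊆ I' ∧ GoodFam mergeable p I' ∧ CoversAll I' ∧
        famWeight I ≤ famWeight I' := by
    intro I hI
    set cov : Finset β := I.sup id with hcov
    have hmemcov : ∀ S ∈ I, ∀ b ∈ S, b ∈ cov := by
      intro S hS b hb
      exact Finset.mem_sup.mpr ⟨S, hS, hb⟩
    refine ⟨I ∪ (Finset.univ \ cov).image (fun b => {b}), Finset.subset_union_left,
      ⟨?_, ?_⟩, ?_, ?_⟩
    · intro S hS
      rcases Finset.mem_union.mp hS with h | h
      · exact hI.1 S h
      · obtain ⟨b, _, rfl⟩ := Finset.mem_image.mp h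
        exact ⟨hsing b, Finset.singleton_nonempty b, by simpa using hp⟩
    · intro S hS T hT hne
      simp only [Finset.coe_union, Set.mem_union, Finset.mem_coe,
        Finset.coe_image, Set.mem_image] at hS hT
      have aux : ∀ b, b ∈ Finset.univ \ cov → ∀ S ∈ I, Disjoint ({b} : Finset β) S := by
        intro b hb S hS
        rw [Finset.disjoint_singleton_left]
        intro hbS
        exact (Finset.mem_sdiff.mp hb).2 (hmemcov S hS b hbS)
      rcases hS with hS | hS <;> rcases hT with hT | hT
      · exact hI.2 hS hT hne
      · obtain ⟨b, hb, rfl⟩ := hT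
        exact (aux b (by simpa using hb) S hS).symm
      · obtain ⟨b, hb, rfl⟩ := hS
        exact aux b (by simpa using hb) T hT
      · obtain ⟨b, _, rfl⟩ := hS
        obtain ⟨c, _, rfl⟩ := hT
        rw [Finset.disjoint_singleton_left, Finset.mem_singleton]
        intro h; exact hne (by rw [h])
    · intro b
      by_cases hb : b ∈ cov
      · obtain ⟨S, hS, hbS⟩ := Finset.mem_sup.mp hb
        exact ⟨S, Finset.mem_union_left _ hS, hbS⟩
      · refine ⟨{b}, Finset.mem_union_right _ ?_, Finset.mem_singleton_self b⟩
        exact Finset.mem_image.mpr ⟨b, Finset.mem_sdiff.mpr ⟨Finset.mem_univ b, hb⟩, rfl⟩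
    · exact Finset.sum_le_sum_of_subset Finset.subset_union_left
  refine ⟨part1, ?_, part3⟩
  -- Part 2
  set C : Set ℕ := {c : ℕ | ∃ I : Finset (Finset β),
      GoodFam mergeable p I ∧ CoversAll I ∧ I.card = c} with hC
  set W : Set ℕ := {w : ℕ | ∃ I : Finset (Finset β),
      GoodFam mergeable p I ∧ CoversAll I ∧ famWeight I = w} with hW
  -- the family of all singletons:
  have hW0 : (famWeight (Finset.univ.image (fun b : β => ({b} : Finset β)))) ∈ W := by
    refine ⟨_, ⟨?_, ?_⟩, ?_, rfl⟩
    · intro S hS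
      obtain ⟨b, _, rfl⟩ := Finset.mem_image.mp hS
      exact ⟨hsing b, Finset.singleton_nonempty b, by simpa using hp⟩
    · intro S hS T hT hne
      simp only [Finset.coe_image, Set.mem_image] at hS hT
      obtain ⟨b, _, rfl⟩ := hS
      obtain ⟨c, _, rfl⟩ := hT
      rw [Finset.disjoint_singleton_left, Finset.mem_singleton]
      intro h; exact hne (by rw [h])
    · intro b
      exact ⟨{b}, Finset.mem_image.mpr ⟨b, Finset.mem_univ b, rfl⟩,
        Finset.mem_singleton_self b⟩
  have hWne : W.Nonempty := ⟨_, hW0⟩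
  have hWbdd : BddAbove W := by
    refine ⟨Fintype.card β, fun w hw => ?_⟩
    obtain ⟨I, hI, hc, rfl⟩ := hw
    have := key I hI hc
    omega
  have hmem : sSup W ∈ W := Nat.sSup_mem hWne hWbdd
  obtain ⟨I₀, hI₀, hc₀, hw₀⟩ := hmem
  have hkey₀ := key I₀ hI₀ hc₀
  apply le_antisymm
  · have : (Fintype.card β - sSup W) ∈ C := ⟨I₀, hI₀, hc₀, by omega⟩
    exact Nat.sInf_le this
  · refine le_csInf ⟨_, ⟨I₀, hI₀, hc₀, rfl⟩⟩ ?_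
    intro c hc
    obtain ⟨I, hI, hcov, rfl⟩ := hc
    have h1 := key I hI hcov
    have h2 : famWeight I ≤ sSup W := le_csSup hWbdd ⟨I, hI, hcov, rfl⟩
    omega
end

section
/- In the NP-hardness reduction construction: given a graph G on vertices v_1,...,v_n, define for each j a (3n+1)×n binary block B^j by: row 0 is all zeros; in column j, rows 3j−2 and 3j−1 are 1 and all others 0; for i ≠ j with v_i adjacent to v_j, column i has 1 exactly in rows 3i−1 and 3i; for i ≠ j with v_i not adjacent to v_j, column i has 1 exactly in rows 3i−2, 3i−1, 3i. Then for any set S ⊆ {1,...,n}, the alignment obtained by concatenating the blocks {B^j : j ∈ S} has homoplasy 0 (no incompatible pair of columns under the four-gamete test) if and only if S is an independent set in G. -/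
/-- Two binary columns are incompatible (four-gamete test): all four gamete
patterns `(1,1), (1,0), (0,1), (0,0)` occur among the rows. -/
def Incompat {R : ℕ} (c c' : Fin R → Bool) : Prop :=
  (∃ r, c r = true ∧ c' r = true) ∧ (∃ r, c r = true ∧ c' r = false) ∧
    (∃ r, c r = false ∧ c' r = true) ∧ (∃ r, c r = false ∧ c' r = false)

/-- The column `i` of the block `B^j` in the NP-hardness reduction from Bounded
Coloring, for a graph `G` on vertices `Fin n`. Rows are `Fin (3n+1)`, with row
`0` corresponding to the sequence `S₀` (all zeros) and row `3i₀ + t`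
(for `t = 1,2,3`) to the sequence `S_{3(i₀+1)-3+t}` of the paper. The column has
1s exactly in rows `3i+1, 3i+2` if `i = j`; in rows `3i+2, 3i+3` if `i ≠ j` and
`v_i` is adjacent to `v_j`; and in rows `3i+1, 3i+2, 3i+3` otherwise. -/
def redCol {n : ℕ} (G : SimpleGraph (Fin n)) [DecidableRel G.Adj]
    (j i : Fin n) (r : Fin (3 * n + 1)) : Bool :=
  if i = j then decide (r.val = 3 * i.val + 1 ∨ r.val = 3 * i.val + 2)
  else if G.Adj i j then decide (r.val = 3 * i.val + 2 ∨ r.val = 3 * i.val + 3)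
  else decide (r.val = 3 * i.val + 1 ∨ r.val = 3 * i.val + 2 ∨ r.val = 3 * i.val + 3)

lemma redCol_support {n : ℕ} (G : SimpleGraph (Fin n)) [DecidableRel G.Adj]
    (j i : Fin n) (r : Fin (3 * n + 1)) (h : redCol G j i r = true) :
    3 * i.val + 1 ≤ r.val ∧ r.val ≤ 3 * i.val + 3 := by
  unfold redCol at h
  split at h
  · simp at h; omega
  · split at h <;> simp at h <;> omega

/-- Key property of the reduction construction: for any set `S` of block indices,
the concatenation of the blocks `{B^j : j ∈ S}` has homoplasy `0` (no pair of
incompatible columns, by the four-gamete test) if and only if `S` is an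
independent set in `G`. -/
theorem reduction_blocks_independent {n : ℕ}
    (G : SimpleGraph (Fin n)) [DecidableRel G.Adj] (S : Finset (Fin n)) :
    (∀ j ∈ S, ∀ j' ∈ S, ∀ i i' : Fin n,
        ¬ Incompat (redCol G j i) (redCol G j' i')) ↔
    (∀ j ∈ S, ∀ j' ∈ S, ¬ G.Adj j j') := by
  constructor
  · intro h j hj j' hj' hadj
    have hne : j ≠ j' := G.ne_of_adj hadj
    have hjn : j.val < n := j.isLt
    apply h j hj j' hj' j j
    refine ⟨⟨⟨3 * j.val + 2, by omega⟩, ?_, ?_⟩,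
      ⟨⟨3 * j.val + 1, by omega⟩, ?_, ?_⟩,
      ⟨⟨3 * j.val + 3, by omega⟩, ?_, ?_⟩,
      ⟨⟨0, by omega⟩, ?_, ?_⟩⟩ <;>
    simp [redCol, hne, hadj, G.adj_symm hadj] <;> omega
  · rintro h j hj j' hj' i i' ⟨⟨r1, h11, h12⟩, ⟨r2, h21, h22⟩, ⟨r3, h31, h32⟩, -⟩
    have s1 := redCol_support G j i r1 h11
    have s2 := redCol_support G j' i' r1 h12
    have hii' : i = i' := Fin.ext (by omega)
    subst hii'
    by_cases hij : i = j <;> by_cases hij' : i = j'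
    · subst hij hij'
      simp only [redCol, if_pos rfl] at h21 h22
      simp at h21 h22; omega
    · by_cases ha' : G.Adj i j'
      · exact h j hj j' hj' (hij ▸ ha')
      · subst hij
        simp only [redCol, if_pos rfl, if_neg hij', if_neg ha'] at h21 h22
        simp at h21 h22; omega
    · by_cases ha : G.Adj i j
      · exact h j hj j' hj' (G.adj_symm (hij' ▸ ha))
      · subst hij'
        simp only [redCol, if_pos rfl, if_neg hij, if_neg ha] at h31 h32
        simp at h31 h32; omega
    · by_cases ha : G.Adj i j <;> by_cases ha' : G.Adj i j'
      · simp only [redCol, if_neg hij, if_neg hij', if_pos ha, if_pos ha'] at h21 h22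
        simp at h21 h22; omega
      · simp only [redCol, if_neg hij, if_neg hij', if_pos ha, if_neg ha'] at h21 h22
        simp at h21 h22; omega
      · simp only [redCol, if_neg hij, if_neg hij', if_neg ha, if_pos ha'] at h31 h32
        simp at h31 h32; omega
      · simp only [redCol, if_neg hij, if_neg hij', if_neg ha, if_neg ha'] at h21 h22
        simp at h21 h22; omega
end

section
/- Each block B^j of the reduction construction has homoplasy 0: no two columns of B^j are incompatible, because every row of B^j contains at most one entry equal to 1, so the pattern (1,1) never occurs for any pair of columns. -/
lemma redCol_range {n : ℕ} (G : SimpleGraph (Fin n)) [DecidableRel G.Adj]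
    (j i : Fin n) (r : Fin (3 * n + 1)) (h : redCol G j i r = true) :
    r.val = 3 * i.val + 1 ∨ r.val = 3 * i.val + 2 ∨ r.val = 3 * i.val + 3 := by
  unfold redCol at h
  split_ifs at h <;> simp at h <;> tauto

/-- Each block `B^j` of the reduction construction has homoplasy `0`: every row
of `B^j` contains at most one entry equal to `1`, so the gamete pattern `(1,1)`
never occurs for a pair of distinct columns, and hence no two columns of `B^j`
are incompatible. -/
theorem reduction_block_homoplasy_zero {n : ℕ}
    (G : SimpleGraph (Fin n)) [DecidableRel G.Adj] (j : Fin n) :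
    (∀ r : Fin (3 * n + 1), ∀ i i' : Fin n,
        redCol G j i r = true → redCol G j i' r = true → i = i') ∧
    (∀ i i' : Fin n, i ≠ i' →
        ¬ ∃ r, redCol G j i r = true ∧ redCol G j i' r = true) ∧
    (∀ i i' : Fin n, ¬ Incompat (redCol G j i) (redCol G j i')) := by
  have key : ∀ r : Fin (3 * n + 1), ∀ i i' : Fin n,
      redCol G j i r = true → redCol G j i' r = true → i = i' := by
    intro r i i' h h'
    have h1 := redCol_range G j i r h
    have h2 := redCol_range G j i' r h'
    have : i.val = i'.val := by omega
    exact Fin.ext this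
  refine ⟨key, ?_, ?_⟩
  · rintro i i' hne ⟨r, h, h'⟩
    exact hne (key r i i' h h')
  · rintro i i' ⟨⟨r1, h1, h1'⟩, ⟨r2, h2, h2'⟩, -, -⟩
    by_cases h : i = i'
    · subst h; rw [h2] at h2'; exact Bool.noConfusion h2'
    · exact h (key r1 i i' h1 h1')
end

section
/- In the reduction construction, if vertices v_i and v_{i'} are adjacent in G, then the i-th column of block B^i and the i-th column of block B^{i'} are incompatible: rows 3i−1, 3i−2, 3i, and 0 respectively exhibit the four gamete patterns (1,1), (1,0), (0,1), (0,0). -/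
/-- If `v_i` and `v_{i'}` are adjacent, then the `i`-th column of block `B^i`
and the `i`-th column of block `B^{i'}` are incompatible: rows `3i+2`, `3i+1`,
`3i+3` and `0` respectively exhibit the four gamete patterns
`(1,1), (1,0), (0,1), (0,0)`. -/
theorem reduction_adjacent_incompatible {n : ℕ}
    (G : SimpleGraph (Fin n)) [DecidableRel G.Adj] (i i' : Fin n)
    (hadj : G.Adj i i') :
    (redCol G i i ⟨3 * i.val + 2, by have := i.isLt; omega⟩ = true ∧
      redCol G i' i ⟨3 * i.val + 2, by have := i.isLt; omega⟩ = true) ∧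
    (redCol G i i ⟨3 * i.val + 1, by have := i.isLt; omega⟩ = true ∧
      redCol G i' i ⟨3 * i.val + 1, by have := i.isLt; omega⟩ = false) ∧
    (redCol G i i ⟨3 * i.val + 3, by have := i.isLt; omega⟩ = false ∧
      redCol G i' i ⟨3 * i.val + 3, by have := i.isLt; omega⟩ = true) ∧
    (redCol G i i ⟨0, by omega⟩ = false ∧
      redCol G i' i ⟨0, by omega⟩ = false) ∧
    Incompat (redCol G i i) (redCol G i' i) := by

  have hne : i ≠ i' := G.ne_of_adj hadj
  have hadj' : G.Adj i i' := hadj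
  have h1 : redCol G i i ⟨3 * i.val + 2, by have := i.isLt; omega⟩ = true := by
    simp [redCol]
  have h2 : redCol G i' i ⟨3 * i.val + 2, by have := i.isLt; omega⟩ = true := by
    simp [redCol, hne, hadj']
  have h3 : redCol G i i ⟨3 * i.val + 1, by have := i.isLt; omega⟩ = true := by
    simp [redCol]
  have h4 : redCol G i' i ⟨3 * i.val + 1, by have := i.isLt; omega⟩ = false := by
    simp [redCol, hne, hadj']
  have h5 : redCol G i i ⟨3 * i.val + 3, by have := i.isLt; omega⟩ = false := by
    simp [redCol]
  have h6 : redCol G i' i ⟨3 * i.val + 3, by have := i.isLt; omega⟩ = true := by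
    simp [redCol, hne, hadj']
  have h7 : redCol G i i ⟨0, by omega⟩ = false := by
    simp [redCol]
  have h8 : redCol G i' i ⟨0, by omega⟩ = false := by
    simp [redCol, hne, hadj']
  exact ⟨⟨h1, h2⟩, ⟨h3, h4⟩, ⟨h5, h6⟩, ⟨h7, h8⟩, ⟨_, h1, h2⟩, ⟨_, h3, h4⟩, ⟨_, h5, h6⟩, ⟨_, h7, h8⟩⟩
end
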